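/- arXiv:1211.0182 — 2 statements merged into one kernel-verified Lean document; each statement's English description precedes it below -/
import Mathlib

section
/- Let V be a set, let Γ be a nonempty collection of nonempty subsets of V, let p > 1 and C ≥ 0. Let R, R' : V → ℝ be functions with R(u) ≥ 0 and R'(u) ≥ 0 for all u ∈ V, such that R'(u) ≤ R(u) + C · R(u)^{1 + 1/p} and R(u) ≤ R'(u) + C · R'(u)^{1 + 1/p} for all u ∈ V, and assume that for each G ∈ Γ the sets {R(u) : u ∈ G} and {R'(u) : u ∈ G} are bounded above. Define λ = inf_{G ∈ Γ} sup_{u ∈ G} R(u) and λ' = inf_{G ∈ Γ} sup_{u ∈ G} R'(u). Then |λ − λ'| ≤ C · max{λ, λ'}^{1 + 1/p}. -/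
/-! The map `φ x = x + C x^q` is monotone and continuous on `[0, ∞)`, so the pointwise bound
`R' ≤ φ ∘ R` passes first through the supremum over each admissible set and then, by continuity,
through the infimum over `Γ`: `λ' ≤ φ λ`. Symmetrically `λ ≤ φ λ'`, and both corrections are at most
`C max(λ, λ')^q`. -/

open Set

section InfSup

variable {V β : Type*} [ConditionallyCompleteLinearOrder β]

noncomputable def infSup (Γ : Set (Set V)) (R : V → β) : β :=
  ⨅ G : Γ, sSup (R '' (G : Set V))

theorem le_csSup_image_of_forall_le {G : Set V} {R : V → β} {a : β} (hG : G.Nonempty)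
    (hbdd : BddAbove (R '' G)) (ha : ∀ u, a ≤ R u) : a ≤ sSup (R '' G) :=
  let ⟨u, hu⟩ := hG
  le_csSup_of_le hbdd (mem_image_of_mem R hu) (ha u)

theorem le_infSup {Γ : Set (Set V)} {R : V → β} {a : β} (hΓ : Γ.Nonempty)
    (hGne : ∀ G ∈ Γ, G.Nonempty) (hbdd : ∀ G ∈ Γ, BddAbove (R '' G)) (ha : ∀ u, a ≤ R u) :
    a ≤ infSup Γ R :=
  have := hΓ.to_subtype
  le_ciInf fun G ↦ le_csSup_image_of_forall_le (hGne G G.2) (hbdd G G.2) ha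

theorem csSup_image_le_map_csSup_image {G : Set V} {R R' : V → β} {f : β → β} {a : β}
    (hG : G.Nonempty) (hbdd : BddAbove (R '' G)) (ha : ∀ u, a ≤ R u)
    (hf : MonotoneOn f (Ici a)) (hR' : ∀ u, R' u ≤ f (R u)) :
    sSup (R' '' G) ≤ f (sSup (R '' G)) := by
  refine csSup_le (hG.image R') ?_
  rintro _ ⟨u, hu, rfl⟩
  exact (hR' u).trans <| hf (ha u) (le_csSup_image_of_forall_le hG hbdd ha)
    (le_csSup hbdd (mem_image_of_mem R hu))

variable [TopologicalSpace β] [OrderTopology β]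

theorem ciInf_le_map_ciInf {ι : Sort*} [Nonempty ι] {s t : ι → β} {f : β → β} {A : Set β}
    (hs : ∀ i, s i ∈ A) (hsbdd : BddBelow (range s)) (htbdd : BddBelow (range t))
    (hf : MonotoneOn f A) (hfc : ContinuousAt f (⨅ i, s i)) (hts : ∀ i, t i ≤ f (s i)) :
    ⨅ i, t i ≤ f (⨅ i, s i) := by
  have hrange : range s ⊆ A := range_subset_iff.2 hs
  have hmap : f (⨅ i, s i) = ⨅ i, f (s i) := by
    rw [iInf, (hf.mono hrange).map_csInf_of_continuousWithinAt hfc.continuousWithinAt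
      (range_nonempty s) hsbdd, ← range_comp, iInf, Function.comp_def]
  rw [hmap]
  exact ciInf_mono htbdd hts

theorem infSup_le_map_infSup {Γ : Set (Set V)} {R R' : V → β} {f : β → β} {a : β}
    (hΓ : Γ.Nonempty) (hGne : ∀ G ∈ Γ, G.Nonempty) (ha : ∀ u, a ≤ R u) (ha' : ∀ u, a ≤ R' u)
    (hbdd : ∀ G ∈ Γ, BddAbove (R '' G)) (hbdd' : ∀ G ∈ Γ, BddAbove (R' '' G))
    (hf : MonotoneOn f (Ici a)) (hfc : ContinuousAt f (infSup Γ R))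
    (hR' : ∀ u, R' u ≤ f (R u)) :
    infSup Γ R' ≤ f (infSup Γ R) := by
  have := hΓ.to_subtype
  refine ciInf_le_map_ciInf (A := Ici a)
    (fun G ↦ le_csSup_image_of_forall_le (hGne G G.2) (hbdd G G.2) ha)
    ⟨a, forall_mem_range.2 fun G ↦ le_csSup_image_of_forall_le (hGne G G.2) (hbdd G G.2) ha⟩
    ⟨a, forall_mem_range.2 fun G ↦ le_csSup_image_of_forall_le (hGne G G.2) (hbdd' G G.2) ha'⟩
    hf hfc fun G ↦ ?_
  exact csSup_image_le_map_csSup_image (hGne G G.2) (hbdd G G.2) ha hf hR'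

end InfSup

theorem monotoneOn_add_mul_rpow {C q : ℝ} (hC : 0 ≤ C) (hq : 0 ≤ q) :
    MonotoneOn (fun x : ℝ ↦ x + C * x ^ q) (Ici 0) :=
  monotoneOn_id.add fun _ hx _ hy hxy ↦
    mul_le_mul_of_nonneg_left (Real.monotoneOn_rpow_Ici_of_exponent_nonneg hq hx hy hxy) hC

theorem continuous_add_mul_rpow (C : ℝ) {q : ℝ} (hq : 0 ≤ q) :
    Continuous fun x : ℝ ↦ x + C * x ^ q :=
  continuous_id.add (continuous_const.mul (Real.continuous_rpow_const hq))

/-- Abstract two-sided min–max comparison: if `R' ≤ R + C·R^{1+1/p}` and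
`R ≤ R' + C·R'^{1+1/p}` pointwise, with `R, R' ≥ 0` and bounded above on each
admissible set, then the inf-sup values satisfy `|λ − λ'| ≤ C·max(λ,λ')^{1+1/p}`. -/
theorem infSup_comparison_two_sided (V : Type*) (Γ : Set (Set V)) (hΓ : Γ.Nonempty)
    (hGne : ∀ G ∈ Γ, G.Nonempty) (p C : ℝ) (hp : 1 < p) (hC : 0 ≤ C)
    (R R' : V → ℝ) (hR0 : ∀ u, 0 ≤ R u) (hR'0 : ∀ u, 0 ≤ R' u)
    (hRR' : ∀ u, R' u ≤ R u + C * R u ^ (1 + 1 / p))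
    (hR'R : ∀ u, R u ≤ R' u + C * R' u ^ (1 + 1 / p))
    (hbdd : ∀ G ∈ Γ, BddAbove (R '' G)) (hbdd' : ∀ G ∈ Γ, BddAbove (R' '' G)) :
    |(⨅ G : Γ, sSup (R '' (G : Set V))) - (⨅ G : Γ, sSup (R' '' (G : Set V)))| ≤
      C * max (⨅ G : Γ, sSup (R '' (G : Set V)))
              (⨅ G : Γ, sSup (R' '' (G : Set V))) ^ (1 + 1 / p) := by
  change |infSup Γ R - infSup Γ R'| ≤ C * max (infSup Γ R) (infSup Γ R') ^ (1 + 1 / p)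
  set q := 1 + 1 / p
  have hq : 0 ≤ q := by positivity
  have hmono := monotoneOn_add_mul_rpow hC hq
  have hcont := continuous_add_mul_rpow C hq
  have h₁ : infSup Γ R' ≤ infSup Γ R + C * infSup Γ R ^ q :=
    infSup_le_map_infSup hΓ hGne hR0 hR'0 hbdd hbdd' hmono hcont.continuousAt hRR'
  have h₂ : infSup Γ R ≤ infSup Γ R' + C * infSup Γ R' ^ q :=
    infSup_le_map_infSup hΓ hGne hR'0 hR0 hbdd' hbdd hmono hcont.continuousAt hR'R
  have hlam := le_infSup hΓ hGne hbdd hR0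
  have hlam' := le_infSup hΓ hGne hbdd' hR'0
  have hm : infSup Γ R ^ q ≤ max (infSup Γ R) (infSup Γ R') ^ q :=
    Real.rpow_le_rpow hlam (le_max_left _ _) hq
  have hm' : infSup Γ R' ^ q ≤ max (infSup Γ R) (infSup Γ R') ^ q :=
    Real.rpow_le_rpow hlam' (le_max_right _ _) hq
  rw [abs_sub_le_iff]
  constructor <;> linarith [mul_le_mul_of_nonneg_left hm hC, mul_le_mul_of_nonneg_left hm' hC]
end

section
/- Let ρ : ℝ → ℝ be a 1-periodic function which is integrable on [0,1] and satisfies ∫₀¹ ρ(t) dt = 0. Then for every ε > 0 and every continuously differentiable function v : ℝ → ℝ with v(0) = v(1) = 0, | ∫₀¹ ρ(x/ε) v(x) dx | ≤ (1/2) · (∫₀¹ |ρ(t)| dt) · ε · ∫₀¹ |v'(x)| dx. -/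
/-!
Let `R(y) = ∫₀^y ρ` and `P(x) = ∫₀^x ρ(t/ε) dt = ε R(x/ε)`. Since `P` is absolutely continuous
with `P' = ρ(·/ε)` a.e., integration by parts and `v(0) = v(1) = 0` give
`∫₀¹ ρ(x/ε) v(x) dx = -∫₀¹ P v'`. As `ρ` has zero mean, `R` is `1`-periodic, and for
`z ∈ [0, 1]` both `R(z) = ∫₀^z ρ` and `R(z) = -∫_z^1 ρ`, so `|R| ≤ ½ ∫₀¹ |ρ|` everywhere.
-/

open MeasureTheory intervalIntegral Set

theorem abs_integral_le_half_integral_abs_of_integral_eq_zero {f : ℝ → ℝ} {a b z : ℝ}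
    (hf : IntervalIntegrable f volume a b) (hz : z ∈ Icc a b) (h0 : ∫ t in a..b, f t = 0) :
    |∫ t in a..z, f t| ≤ 1 / 2 * ∫ t in a..b, |f t| := by
  have haz : IntervalIntegrable f volume a z :=
    hf.mono_set (uIcc_subset_uIcc left_mem_uIcc (mem_uIcc_of_le hz.1 hz.2))
  have hzb : IntervalIntegrable f volume z b :=
    hf.mono_set (uIcc_subset_uIcc (mem_uIcc_of_le hz.1 hz.2) right_mem_uIcc)
  have hsplit := integral_add_adjacent_intervals haz hzb
  have habs := integral_add_adjacent_intervals haz.abs hzb.abs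
  have hleft := abs_integral_le_integral_abs (μ := volume) (f := f) hz.1
  have hright := abs_integral_le_integral_abs (μ := volume) (f := f) hz.2
  rw [h0] at hsplit
  rw [eq_neg_of_add_eq_zero_right hsplit, abs_neg] at hright
  linarith

theorem Function.Periodic.periodic_primitive {E : Type*} [NormedAddCommGroup E]
    [NormedSpace ℝ E] {f : ℝ → E} {T : ℝ} (hf : Function.Periodic f T) (hT : T ≠ 0)
    (hint : IntervalIntegrable f volume 0 T) (h0 : ∫ t in 0..T, f t = 0) :
    Function.Periodic (fun y ↦ ∫ t in 0..y, f t) T := fun y ↦ by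
  simp only [hf.intervalIntegral_add_eq_add 0 y (hf.intervalIntegrable₀ hT hint), zero_add, h0,
    add_zero]

theorem Function.Periodic.abs_primitive_le_half_integral_abs {f : ℝ → ℝ} {T : ℝ}
    (hf : Function.Periodic f T) (hT : 0 < T) (hint : IntervalIntegrable f volume 0 T)
    (h0 : ∫ t in 0..T, f t = 0) (y : ℝ) :
    |∫ t in 0..y, f t| ≤ 1 / 2 * ∫ t in 0..T, |f t| := by
  obtain ⟨z, hz, hyz⟩ := (hf.periodic_primitive hT.ne' hint h0).exists_mem_Ico₀ hT y
  rw [hyz]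
  exact abs_integral_le_half_integral_abs_of_integral_eq_zero hint (Ico_subset_Icc_self hz) h0

theorem integral_mul_eq_neg_integral_primitive_mul_deriv {w v : ℝ → ℝ} {a b : ℝ}
    (hw : IntervalIntegrable w volume a b) (hv : AbsolutelyContinuousOnInterval v a b)
    (hva : v a = 0) (hvb : v b = 0) :
    ∫ x in a..b, w x * v x = -∫ x in a..b, (∫ t in a..x, w t) * deriv v x := by
  have hP := hw.absolutelyContinuousOnInterval_intervalIntegral left_mem_uIcc
  have hderiv :
      ∫ x in a..b, deriv (fun y ↦ ∫ t in a..y, w t) x * v x = ∫ x in a..b, w x * v x := by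
    refine integral_congr_ae ?_
    filter_upwards [hw.ae_hasDerivAt_integral] with x hx hxab
    rw [(hx (uIoc_subset_uIcc hxab) a left_mem_uIcc).deriv]
  rw [hP.integral_mul_deriv_eq_deriv_mul hv, hderiv, hva, hvb]
  ring

theorem abs_integral_mul_le_of_abs_primitive_le {w v : ℝ → ℝ} {a b M : ℝ} (hab : a ≤ b)
    (hw : IntervalIntegrable w volume a b) (hv : AbsolutelyContinuousOnInterval v a b)
    (hva : v a = 0) (hvb : v b = 0) (hM : ∀ x ∈ Icc a b, |∫ t in a..x, w t| ≤ M) :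
    |∫ x in a..b, w x * v x| ≤ M * ∫ x in a..b, |deriv v x| := by
  have hP := (hw.absolutelyContinuousOnInterval_intervalIntegral left_mem_uIcc).continuousOn
  rw [integral_mul_eq_neg_integral_primitive_mul_deriv hw hv hva hvb, abs_neg,
    ← intervalIntegral.integral_const_mul]
  calc _ ≤ ∫ x in a..b, |(∫ t in a..x, w t) * deriv v x| := abs_integral_le_integral_abs hab
    _ ≤ ∫ x in a..b, M * |deriv v x| := by
      refine integral_mono_on hab (hv.intervalIntegrable_deriv.continuousOn_mul hP).abs
        (hv.intervalIntegrable_deriv.abs.const_mul M) fun x hx ↦ ?_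
      rw [abs_mul]
      exact mul_le_mul_of_nonneg_right (hM x hx) (abs_nonneg _)

/-- One-dimensional oscillation estimate: for a `1`-periodic `ρ ∈ L¹(0,1)` with zero
mean, and any `C¹` function `v` with `v(0) = v(1) = 0`,
`|∫₀¹ ρ(x/ε) v(x) dx| ≤ ½ ‖ρ‖_{L¹(0,1)} ε ∫₀¹ |v'|`. -/
theorem oneDim_oscillation_estimate (ρ : ℝ → ℝ) (hper : Function.Periodic ρ 1)
    (hint : IntervalIntegrable ρ volume 0 1)
    (hmean : ∫ t in (0:ℝ)..1, ρ t = 0)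
    (ε : ℝ) (hε : 0 < ε)
    (v : ℝ → ℝ) (hv : ContDiff ℝ 1 v) (hv0 : v 0 = 0) (hv1 : v 1 = 0) :
    |∫ x in (0:ℝ)..1, ρ (x / ε) * v x| ≤
      1 / 2 * (∫ t in (0:ℝ)..1, |ρ t|) * ε * ∫ x in (0:ℝ)..1, |deriv v x| := by
  have hw : IntervalIntegrable (fun x ↦ ρ (x / ε)) volume 0 1 := by
    simpa [div_eq_mul_inv, hε.ne'] using
      (hper.intervalIntegrable₀ one_ne_zero hint 0 ε⁻¹).comp_mul_right (c := ε⁻¹)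
  have hM : ∀ x ∈ Icc (0:ℝ) 1,
      |∫ t in (0:ℝ)..x, ρ (t / ε)| ≤ ε * (1 / 2 * ∫ t in (0:ℝ)..1, |ρ t|) := by
    intro x _
    rw [integral_comp_div _ hε.ne', zero_div, smul_eq_mul, abs_mul, abs_of_pos hε]
    exact mul_le_mul_of_nonneg_left
      (hper.abs_primitive_le_half_integral_abs one_pos hint hmean _) hε.le
  calc _ ≤ ε * (1 / 2 * ∫ t in (0:ℝ)..1, |ρ t|) * ∫ x in (0:ℝ)..1, |deriv v x| :=
        abs_integral_mul_le_of_abs_primitive_le zero_le_one hw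
          hv.contDiffOn.absolutelyContinuousOnInterval hv0 hv1 hM
    _ = _ := by ring
end
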